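/- Let V = Σ_{i=0}^{d} n_i·Sym^{2i}(ℂ²) and W = Σ_{i=1}^{d} m_i·Sym^{2i−1}(ℂ²) be two finite-dimensional representations of SU(2), and for 1 ≤ i ≤ d set a_i = Σ_{j=i}^{d} (n_j − m_j) ∈ ℤ. Then dim(V⊗V)[0] + dim(W⊗W)[0] − 2·dim(V⊗W)[1] = (a_1 + n_0)² + Σ_{i=1}^{d} [a_i² + (a_i + m_i)²]. -/

import Mathlib

/-- `wtDim ℓ k` is the dimension of the `k`-weight space (for the standard maximal torus
`S¹ ⊂ SU(2)`, acting by `z ↦ z^k`) of the representation `⊕ᵢ ℓ i · Sym^i(ℂ²)` of `SU(2)`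
encoded by its multiplicity function `ℓ : ℕ → ℕ`:
`dim E[k] = Σ_{i ≥ |k|, i ≡ k (mod 2)} ℓ i`. -/
noncomputable def wtDim (ℓ : ℕ → ℕ) (k : ℤ) : ℕ :=
  ∑ᶠ i : ℕ, if k.natAbs ≤ i ∧ k % 2 = (i : ℤ) % 2 then ℓ i else 0

/-- `tensorWtDim ℓ₁ ℓ₂ k` is the dimension of the `k`-weight space of the tensor product
of the `SU(2)`-representations encoded by `ℓ₁` and `ℓ₂`:
`dim (E⊗F)[k] = Σ_{j ∈ ℤ} dim E[j] · dim F[k-j]`. -/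
noncomputable def tensorWtDim (ℓ₁ ℓ₂ : ℕ → ℕ) (k : ℤ) : ℕ :=
  ∑ᶠ j : ℤ, wtDim ℓ₁ j * wtDim ℓ₂ (k - j)

/-- Multiplicity function of `V = Σ_{i=0}^{d} n_i · Sym^{2i}(ℂ²)`
(trivial central character). -/
def evenRep (d : ℕ) (n : ℕ → ℕ) : ℕ → ℕ :=
  fun j => if j % 2 = 0 ∧ j / 2 ≤ d then n (j / 2) else 0

/-- Multiplicity function of `W = Σ_{i=1}^{d} m_i · Sym^{2i-1}(ℂ²)`
(non-trivial central character). -/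
def oddRep (d : ℕ) (m : ℕ → ℕ) : ℕ → ℕ :=
  fun j => if j % 2 = 1 ∧ (j + 1) / 2 ≤ d then m ((j + 1) / 2) else 0

/-- The quantity `a_i = Σ_{j=i}^{d} (n_j − m_j)` (an empty sum when `i > d`). -/
def aCoeff (d : ℕ) (n m : ℕ → ℕ) (i : ℕ) : ℤ :=
  ∑ j ∈ Finset.Icc i d, ((n j : ℤ) - (m j : ℤ))

/-!
Only even weights occur in `V` and only odd ones in `W`, and with the tail sums
`N_i = Σ_{j=i}^{d} n_j`, `M_i = Σ_{j=i}^{d} m_j` one has `dim V[±2i] = N_i` and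
`dim W[±(2i-1)] = M_i`. Reindexing the three tensor products by `t ∈ [-d, d]` and using
`dim E[-k] = dim E[k]`, the left-hand side becomes
`Σ_t (dim V[2t]² + dim W[2t+1]² - 2 dim V[2t] dim W[1-2t])`.
Grouping `t = i` with `t = -i` gives `(N_i - M_i)² + (N_i - M_{i+1})² = a_i² + (a_i + m_i)²`,
and the term `t = 0` is `(N_0 - M_1)² = (a_1 + n_0)²`.
-/

open Finset Function

theorem finsum_ite_add_le_eq_sum_Icc {M : Type*} [AddCommMonoid M] (f : ℕ → M) (i d : ℕ) :
    ∑ᶠ l : ℕ, (if i + l ≤ d then f (i + l) else 0) = ∑ j ∈ Icc i d, f j := by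
  rw [finsum_eq_sum_of_support_subset (s := range (d + 1 - i)), ← Ico_add_one_right_eq_Icc,
    sum_Ico_eq_sum_range]
  · exact sum_congr rfl fun l hl => if_pos (by have := mem_range.mp hl; omega)
  · intro l hl
    obtain ⟨hle, -⟩ := by simpa only [mem_support, ne_eq, ite_eq_right_iff, not_forall] using hl
    rw [coe_range, Set.mem_Iio]
    omega

theorem sum_Icc_neg_eq_add_sum_pairs {M : Type*} [AddCommMonoid M] (f : ℤ → M) (d : ℕ) :
    ∑ t ∈ Icc (-d : ℤ) d, f t = f 0 + ∑ i ∈ Icc 1 d, (f i + f (-i)) := by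
  induction d with
  | zero => simp
  | succ d ih =>
    push_cast
    rw [Finset.Icc_succ_succ, sum_union (by simp), sum_pair (by omega), ih,
      sum_Icc_succ_top (by omega)]
    push_cast
    abel

section WeightSpaces

variable (ℓ : ℕ → ℕ)

theorem wtDim_neg (k : ℤ) : wtDim ℓ (-k) = wtDim ℓ k := by
  simp only [wtDim, Int.natAbs_neg, Int.neg_emod_two]

theorem wtDim_eq_finsum (k : ℤ) : wtDim ℓ k = ∑ᶠ i : ℕ, ℓ (k.natAbs + 2 * i) := by
  classical
  have hinj : Injective fun i : ℕ => k.natAbs + 2 * i := fun i j h => by simp only at h; omega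
  rw [← finsum_mem_range hinj, wtDim]
  refine finsum_congr fun i => ?_
  rw [finsum_eq_if]
  refine if_congr ⟨fun h => ⟨(i - k.natAbs) / 2, by dsimp only; omega⟩, ?_⟩ rfl rfl
  rintro ⟨j, rfl⟩
  dsimp only
  omega

theorem wtDim_eq_zero {k : ℤ} (h : ∀ i, k.natAbs ≤ i → k % 2 = (i : ℤ) % 2 → ℓ i = 0) :
    wtDim ℓ k = 0 :=
  finsum_eq_zero_of_forall_eq_zero fun i => by split_ifs with hi; exacts [h i hi.1 hi.2, rfl]

theorem tensorWtDim_eq_sum_of_support_subset {ℓ₁ : ℕ → ℕ} (ℓ₂ : ℕ → ℕ) {g : ℤ → ℤ}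
    (hg : Injective g) {s : Finset ℤ} (h : support (wtDim ℓ₁) ⊆ s.image g) (k : ℤ) :
    tensorWtDim ℓ₁ ℓ₂ k = ∑ t ∈ s, wtDim ℓ₁ (g t) * wtDim ℓ₂ (k - g t) := by
  rw [tensorWtDim, finsum_eq_sum_of_support_subset _ ((support_mul_subset_left _ _).trans h),
    sum_image hg.injOn]

end WeightSpaces

def tailSum (d : ℕ) (n : ℕ → ℕ) (i : ℕ) : ℕ := ∑ j ∈ Icc i d, n j

theorem tailSum_eq_add (n : ℕ → ℕ) {d i : ℕ} (hi : i ≤ d) :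
    tailSum d n i = n i + tailSum d n (i + 1) := by
  rw [tailSum, tailSum, Icc_add_one_left_eq_Ioc, add_sum_Ioc_eq_sum_Icc hi]

theorem aCoeff_eq_tailSum_sub (d : ℕ) (n m : ℕ → ℕ) (i : ℕ) :
    aCoeff d n m i = tailSum d n i - tailSum d m i := by
  simp [aCoeff, tailSum, sum_sub_distrib]

section Representations

variable {d : ℕ}

theorem wtDim_evenRep_of_natAbs_eq (n : ℕ → ℕ) {k : ℤ} {i : ℕ} (hk : k.natAbs = 2 * i) :
    wtDim (evenRep d n) k = tailSum d n i := by
  rw [wtDim_eq_finsum, tailSum, ← finsum_ite_add_le_eq_sum_Icc]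
  refine finsum_congr fun l => ?_
  have hpar : (k.natAbs + 2 * l) % 2 = 0 := by omega
  have hhalf : (k.natAbs + 2 * l) / 2 = i + l := by omega
  simp only [evenRep, hpar, hhalf, true_and]

theorem wtDim_oddRep_of_natAbs_add_one_eq (m : ℕ → ℕ) {k : ℤ} {i : ℕ}
    (hk : k.natAbs + 1 = 2 * i) : wtDim (oddRep d m) k = tailSum d m i := by
  rw [wtDim_eq_finsum, tailSum, ← finsum_ite_add_le_eq_sum_Icc]
  refine finsum_congr fun l => ?_
  have hpar : (k.natAbs + 2 * l) % 2 = 1 := by omega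
  have hhalf : (k.natAbs + 2 * l + 1) / 2 = i + l := by omega
  simp only [oddRep, hpar, hhalf, true_and]

theorem support_wtDim_evenRep (n : ℕ → ℕ) :
    support (wtDim (evenRep d n)) ⊆ (Icc (-d : ℤ) d).image (2 * ·) := by
  intro k hk
  by_contra hk'
  refine hk (wtDim_eq_zero _ fun i hki hpar => if_neg ?_)
  rintro ⟨hpar', hle⟩
  exact hk' (mem_image.2 ⟨k / 2, mem_Icc.2 ⟨by omega, by omega⟩, by omega⟩)

theorem support_wtDim_oddRep (m : ℕ → ℕ) :
    support (wtDim (oddRep d m)) ⊆ (Icc (-d : ℤ) d).image (2 * · + 1) := by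
  intro k hk
  by_contra hk'
  refine hk (wtDim_eq_zero _ fun i hki hpar => if_neg ?_)
  rintro ⟨hpar', hle⟩
  exact hk' (mem_image.2 ⟨k / 2, mem_Icc.2 ⟨by omega, by omega⟩, by omega⟩)

end Representations

theorem tensorWtDim_combination_eq_sum (d : ℕ) (n m : ℕ → ℕ) :
    (tensorWtDim (evenRep d n) (evenRep d n) 0 : ℤ)
        + tensorWtDim (oddRep d m) (oddRep d m) 0
        - 2 * tensorWtDim (evenRep d n) (oddRep d m) 1 =
      ∑ t ∈ Icc (-d : ℤ) d,
        ((wtDim (evenRep d n) (2 * t) : ℤ) ^ 2 + (wtDim (oddRep d m) (2 * t + 1) : ℤ) ^ 2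
          - 2 * wtDim (evenRep d n) (2 * t) * wtDim (oddRep d m) (1 - 2 * t)) := by
  have hinj : Injective fun t : ℤ => 2 * t := mul_right_injective₀ two_ne_zero
  have hinj' : Injective fun t : ℤ => 2 * t + 1 := fun a b h => hinj (add_right_cancel h)
  rw [tensorWtDim_eq_sum_of_support_subset _ hinj (support_wtDim_evenRep n),
    tensorWtDim_eq_sum_of_support_subset _ hinj' (support_wtDim_oddRep m),
    tensorWtDim_eq_sum_of_support_subset _ hinj (support_wtDim_evenRep n)]
  push_cast
  rw [mul_sum, ← sum_add_distrib, ← sum_sub_distrib]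
  refine sum_congr rfl fun t _ => ?_
  rw [zero_sub, wtDim_neg, zero_sub, wtDim_neg]
  ring

theorem weight_pair_sum_eq {d i : ℕ} (n m : ℕ → ℕ) (hi : 1 ≤ i) (hid : i ≤ d) :
    ((wtDim (evenRep d n) (2 * i) : ℤ) ^ 2 + (wtDim (oddRep d m) (2 * i + 1) : ℤ) ^ 2
        - 2 * wtDim (evenRep d n) (2 * i) * wtDim (oddRep d m) (1 - 2 * i))
      + ((wtDim (evenRep d n) (2 * -i) : ℤ) ^ 2 + (wtDim (oddRep d m) (2 * -i + 1) : ℤ) ^ 2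
        - 2 * wtDim (evenRep d n) (2 * -i) * wtDim (oddRep d m) (1 - 2 * -i)) =
      aCoeff d n m i ^ 2 + (aCoeff d n m i + m i) ^ 2 := by
  have hV₁ : wtDim (evenRep d n) (2 * i) = tailSum d n i :=
    wtDim_evenRep_of_natAbs_eq n (by omega)
  have hV₂ : wtDim (evenRep d n) (2 * -i) = tailSum d n i :=
    wtDim_evenRep_of_natAbs_eq n (by omega)
  have hW₁ : wtDim (oddRep d m) (2 * i + 1) = tailSum d m (i + 1) :=
    wtDim_oddRep_of_natAbs_add_one_eq m (by omega)
  have hW₂ : wtDim (oddRep d m) (1 - 2 * -i) = tailSum d m (i + 1) :=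
    wtDim_oddRep_of_natAbs_add_one_eq m (by omega)
  have hW₃ : wtDim (oddRep d m) (1 - 2 * i) = tailSum d m i :=
    wtDim_oddRep_of_natAbs_add_one_eq m (by omega)
  have hW₄ : wtDim (oddRep d m) (2 * -i + 1) = tailSum d m i :=
    wtDim_oddRep_of_natAbs_add_one_eq m (by omega)
  rw [hV₁, hV₂, hW₁, hW₂, hW₃, hW₄, aCoeff_eq_tailSum_sub, tailSum_eq_add m hid]
  push_cast
  ring

/-- For `V = Σ_{i=0}^{d} n_i·Sym^{2i}(ℂ²)`, `W = Σ_{i=1}^{d} m_i·Sym^{2i-1}(ℂ²)`, and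
`a_i = Σ_{j=i}^{d} (n_j − m_j)`,
`dim(V⊗V)[0] + dim(W⊗W)[0] − 2·dim(V⊗W)[1] = (a_1+n_0)² + Σ_{i=1}^{d} [a_i² + (a_i+m_i)²]`. -/
theorem exact_formula (d : ℕ) (n m : ℕ → ℕ) :
    (tensorWtDim (evenRep d n) (evenRep d n) 0 : ℤ)
        + tensorWtDim (oddRep d m) (oddRep d m) 0
        - 2 * tensorWtDim (evenRep d n) (oddRep d m) 1 =
      (aCoeff d n m 1 + (n 0 : ℤ)) ^ 2
        + ∑ i ∈ Finset.Icc 1 d,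
            ((aCoeff d n m i) ^ 2 + (aCoeff d n m i + (m i : ℤ)) ^ 2) := by
  rw [tensorWtDim_combination_eq_sum, sum_Icc_neg_eq_add_sum_pairs]
  congr 1
  · have hV : wtDim (evenRep d n) 0 = tailSum d n 0 := wtDim_evenRep_of_natAbs_eq n rfl
    have hW : wtDim (oddRep d m) 1 = tailSum d m 1 := wtDim_oddRep_of_natAbs_add_one_eq m rfl
    rw [mul_zero, zero_add, sub_zero, hV, hW, aCoeff_eq_tailSum_sub,
      tailSum_eq_add n (Nat.zero_le d)]
    push_cast
    ring
  · exact sum_congr rfl fun i hi => weight_pair_sum_eq n m (mem_Icc.1 hi).1 (mem_Icc.1 hi).2
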